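/- Let ℓ_1, ..., ℓ_n : ℝ^d → ℝ, let 0 ≤ σ_1 ≤ ... ≤ σ_n sum to 1, let μ > 0, and define R_μ(w) := Σ_{i=1}^n σ_i ℓ_{(i)}(w) + (μ/2)‖w‖₂². Let ν > 0 and let Ω : ℝⁿ → ℝ be strongly convex, permutation-invariant, with inf_{λ ∈ P(σ)} Ω(λ) ≥ 0, and define the smoothed objective R_{μ,νΩ}(w) := max_{λ ∈ P(σ)} { ⟨λ, ℓ(w)⟩ − ν Ω(λ) } + (μ/2)‖w‖₂², where ℓ(w) = (ℓ_1(w), ..., ℓ_n(w)). If ŵ ∈ ℝ^d satisfies R_{μ,νΩ}(ŵ) − inf_{w ∈ ℝ^d} R_{μ,νΩ}(w) ≤ ε, then R_μ(ŵ) − inf_{w ∈ ℝ^d} R_μ(w) ≤ ε + ν Ω(σ). -/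
import Mathlib


/-- The permutahedron generated by `σ`: the image of `σ` under all doubly stochastic
matrices. -/
def permutahedron {n : ℕ} (σ : Fin n → ℝ) : Set (Fin n → ℝ) :=
  {lam | ∃ P : Matrix (Fin n) (Fin n) ℝ,
    (∀ i j, P i j ∈ Set.Icc (0 : ℝ) 1) ∧ (∀ i, ∑ j, P i j = 1) ∧ (∀ j, ∑ i, P i j = 1) ∧
    lam = P.mulVec σ}

/-- The standard pairing `⟨a, b⟩ = ∑ᵢ aᵢ bᵢ` on `ℝⁿ`. -/
def dotp {n : ℕ} (a b : Fin n → ℝ) : ℝ := ∑ i, a i * b i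

lemma comp_mem_permutahedron {n : ℕ} (σ : Fin n → ℝ) (g : Equiv.Perm (Fin n)) :
    σ ∘ g ∈ permutahedron σ := by
  have hds := permMatrix_mem_doublyStochastic (R := ℝ) (σ := g)
  refine ⟨g.permMatrix ℝ, fun i j => ⟨nonneg_of_mem_doublyStochastic hds,
    le_one_of_mem_doublyStochastic hds⟩, sum_row_of_mem_doublyStochastic hds,
    sum_col_of_mem_doublyStochastic hds, ?_⟩
  funext i
  simp [Matrix.mulVec, dotProduct, Equiv.Perm.permMatrix, PEquiv.toMatrix_apply,
    Equiv.toPEquiv_apply]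

lemma self_mem_permutahedron {n : ℕ} (σ : Fin n → ℝ) : σ ∈ permutahedron σ := by
  have := comp_mem_permutahedron σ 1
  simpa using this

lemma dotp_le_sorted {n : ℕ} (σ v : Fin n → ℝ) (hσ : Monotone σ)
    {lam : Fin n → ℝ} (hlam : lam ∈ permutahedron σ) :
    dotp lam v ≤ ∑ i, σ i * v (Tuple.sort v i) := by
  obtain ⟨P, h1, h2, h3, rfl⟩ := hlam
  have hP : P ∈ doublyStochastic ℝ (Fin n) := by
    rw [mem_doublyStochastic_iff_sum]; exact ⟨fun i j => (h1 i j).1, h2, h3⟩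
  obtain ⟨w, hw0, hw1, hwP⟩ := exists_eq_sum_perm_of_mem_doublyStochastic hP
  have key : ∀ i, (P.mulVec σ) i = ∑ τ : Equiv.Perm (Fin n), w τ * σ (τ i) := by
    intro i
    rw [← hwP]
    simp only [Matrix.mulVec, dotProduct, Matrix.sum_apply, Matrix.smul_apply,
      smul_eq_mul, Equiv.Perm.permMatrix, PEquiv.toMatrix_apply, Equiv.toPEquiv_apply,
      Option.mem_def, Option.some.injEq]
    simp only [Finset.sum_mul]
    rw [Finset.sum_comm]
    refine Finset.sum_congr rfl fun τ _ => ?_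
    simp [mul_ite, ite_mul, Finset.sum_ite_eq]
  have expand : dotp (P.mulVec σ) v
      = ∑ τ : Equiv.Perm (Fin n), w τ * ∑ i, σ (τ i) * v i := by
    unfold dotp
    simp only [key, Finset.sum_mul, Finset.mul_sum, mul_assoc]
    rw [Finset.sum_comm]
  rw [expand]
  have hbound : ∀ τ : Equiv.Perm (Fin n),
      (∑ i, σ (τ i) * v i) ≤ ∑ i, σ i * v (Tuple.sort v i) := by
    intro τ
    have hmono : Monovary σ (v ∘ Tuple.sort v) := hσ.monovary (Tuple.monotone_sort v)
    have h := hmono.sum_comp_perm_smul_le_sum_smul (σ := (Tuple.sort v).trans τ)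
    simp only [smul_eq_mul, Equiv.trans_apply, Function.comp_apply] at h
    calc (∑ i, σ (τ i) * v i) = ∑ i, σ (τ (Tuple.sort v i)) * v (Tuple.sort v i) :=
          (Equiv.sum_comp (Tuple.sort v) (fun i => σ (τ i) * v i)).symm
      _ ≤ ∑ i, σ i * v (Tuple.sort v i) := h
  calc (∑ τ : Equiv.Perm (Fin n), w τ * ∑ i, σ (τ i) * v i)
      ≤ ∑ τ : Equiv.Perm (Fin n), w τ * ∑ i, σ i * v (Tuple.sort v i) :=
        Finset.sum_le_sum fun τ _ => mul_le_mul_of_nonneg_left (hbound τ) (hw0 τ)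
    _ = ∑ i, σ i * v (Tuple.sort v i) := by rw [← Finset.sum_mul, hw1, one_mul]

lemma dotp_sorted_eq {n : ℕ} (σ v : Fin n → ℝ) :
    dotp (σ ∘ (Tuple.sort v).symm) v = ∑ i, σ i * v (Tuple.sort v i) := by
  unfold dotp
  rw [← Equiv.sum_comp (Tuple.sort v) (fun i => (σ ∘ (Tuple.sort v).symm) i * v i)]
  simp

/-- The regularized spectral risk `R_μ(w) = ∑ᵢ σᵢ ℓ₍ᵢ₎(w) + (μ/2)‖w‖²`, with the losses at `w`
sorted in non-decreasing order via `Tuple.sort`. -/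
noncomputable def regSpectralRisk {d n : ℕ} (σ : Fin n → ℝ)
    (ℓ : Fin n → EuclideanSpace ℝ (Fin d) → ℝ) (μ : ℝ) (w : EuclideanSpace ℝ (Fin d)) : ℝ :=
  (∑ i, σ i * ℓ (Tuple.sort (fun j => ℓ j w) i) w) + μ / 2 * ‖w‖ ^ 2

/-- The smoothed regularized objective
`R_{μ,νΩ}(w) = max_{λ ∈ P(σ)} {⟨λ, ℓ(w)⟩ − νΩ(λ)} + (μ/2)‖w‖²` (via `sSup`). -/
noncomputable def regSmoothedRisk {d n : ℕ} (σ : Fin n → ℝ)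
    (ℓ : Fin n → EuclideanSpace ℝ (Fin d) → ℝ) (Om : (Fin n → ℝ) → ℝ) (ν μ : ℝ)
    (w : EuclideanSpace ℝ (Fin d)) : ℝ :=
  sSup ((fun lam => dotp lam (fun i => ℓ i w) - ν * Om lam) '' permutahedron σ) +
    μ / 2 * ‖w‖ ^ 2

/-- Any `ε`-accurate minimizer of the smoothed regularized objective
`R_{μ,νΩ}` is an `(ε + νΩ(σ))`-accurate minimizer of the original regularized spectral risk
`R_μ`. -/
theorem stmt15 {d n : ℕ} (ℓ : Fin n → EuclideanSpace ℝ (Fin d) → ℝ)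
    (σ : Fin n → ℝ) (hσ_nonneg : ∀ i, 0 ≤ σ i) (hσ_mono : Monotone σ)
    (hσ_sum : ∑ i, σ i = 1)
    (μ : ℝ) (hμ : 0 < μ) (ν : ℝ) (hν : 0 < ν)
    (Om : (Fin n → ℝ) → ℝ) (κ : ℝ) (hκ : 0 < κ)
    (hΩ_sc : StrongConvexOn Set.univ κ Om)
    (hΩ_perm : ∀ (π : Equiv.Perm (Fin n)) (lam : Fin n → ℝ), Om (lam ∘ π) = Om lam)
    (hΩ_nonneg : ∀ lam ∈ permutahedron σ, 0 ≤ Om lam)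
    (ε : ℝ) (wHat : EuclideanSpace ℝ (Fin d))
    (hwHat : regSmoothedRisk σ ℓ Om ν μ wHat - ⨅ w, regSmoothedRisk σ ℓ Om ν μ w ≤ ε) :
    regSpectralRisk σ ℓ μ wHat - ⨅ w, regSpectralRisk σ ℓ μ w ≤ ε + ν * Om σ := by
  have hΩσ : 0 ≤ Om σ := hΩ_nonneg σ (self_mem_permutahedron σ)
  have hc : 0 ≤ ν * Om σ := mul_nonneg hν.le hΩσ
  have sand : ∀ w : EuclideanSpace ℝ (Fin d),
      regSmoothedRisk σ ℓ Om ν μ w ≤ regSpectralRisk σ ℓ μ w ∧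
      regSpectralRisk σ ℓ μ w ≤ regSmoothedRisk σ ℓ Om ν μ w + ν * Om σ := by
    intro w
    set v : Fin n → ℝ := fun i => ℓ i w with hv
    set M : ℝ := ∑ i, σ i * v (Tuple.sort v i) with hM
    set A : Set ℝ := (fun lam => dotp lam v - ν * Om lam) '' permutahedron σ with hA
    have hub : ∀ x ∈ A, x ≤ M := by
      rintro x ⟨lam, hlam, rfl⟩
      have h1 := dotp_le_sorted σ v hσ_mono hlam
      have h2 := mul_nonneg hν.le (hΩ_nonneg lam hlam)
      simp only [hM]
      linarith
    have hne : A.Nonempty := ⟨_, σ, self_mem_permutahedron σ, rfl⟩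
    have hbdd : BddAbove A := ⟨M, hub⟩
    have hsup_le : sSup A ≤ M := csSup_le hne hub
    have hle_sup : M - ν * Om σ ≤ sSup A := by
      have hmem : (dotp (σ ∘ (Tuple.sort v).symm) v - ν * Om (σ ∘ (Tuple.sort v).symm)) ∈ A :=
        ⟨_, comp_mem_permutahedron σ _, rfl⟩
      have := le_csSup hbdd hmem
      rwa [dotp_sorted_eq, hΩ_perm ((Tuple.sort v).symm) σ] at this
    have hspec : regSpectralRisk σ ℓ μ w = M + μ / 2 * ‖w‖ ^ 2 := rfl
    have hsmooth : regSmoothedRisk σ ℓ Om ν μ w = sSup A + μ / 2 * ‖w‖ ^ 2 := rfl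
    rw [hspec, hsmooth]
    constructor <;> linarith
  by_cases hB : BddBelow (Set.range fun w => regSmoothedRisk σ ℓ Om ν μ w)
  · have hinf : (⨅ w, regSmoothedRisk σ ℓ Om ν μ w) ≤ ⨅ w, regSpectralRisk σ ℓ μ w :=
      le_ciInf fun w => ciInf_le_of_le hB w (sand w).1
    have := (sand wHat).2
    linarith
  · have hB2 : ¬ BddBelow (Set.range fun w => regSpectralRisk σ ℓ μ w) := by
      rintro ⟨b, hb⟩
      refine hB ⟨b - ν * Om σ, ?_⟩
      rintro x ⟨w, rfl⟩
      have h1 := (sand w).2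
      have h2 : b ≤ regSpectralRisk σ ℓ μ w := hb (Set.mem_range_self w)
      simp only
      linarith
    rw [Real.iInf_of_not_bddBelow hB] at hwHat
    rw [Real.iInf_of_not_bddBelow hB2]
    have := (sand wHat).2
    linarith
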